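/- arXiv:2012.04820 — 2 statements merged into one kernel-verified Lean document; each statement's English description precedes it below -/
import Mathlib

section
/- Let T be a tree of order n and t a positive integer with n ≥ 2t+2. Then cfc(T) = n−t if and only if Δ(T) = n−t. -/
open SimpleGraph

/-- An edge coloring `c` makes `G` conflict-free connected: every two distinct
vertices are joined by a path containing a color used on exactly one of its edges. -/
def IsCFConnColoring {V : Type*} (G : SimpleGraph V) (c : Sym2 V → ℕ) : Prop :=
  ∀ u v : V, u ≠ v → ∃ p : G.Walk u v, p.IsPath ∧
    ∃ col : ℕ, (p.edges.filter (fun e => c e = col)).length = 1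

/-- The conflict-free connection number: the minimum number of colors in a
conflict-free connection coloring. -/
noncomputable def cfcNum {V : Type*} (G : SimpleGraph V) : ℕ :=
  sInf {k | ∃ c : Sym2 V → ℕ, (∀ e, c e < k) ∧ IsCFConnColoring G c}

/-- The independence number: the maximum size of a set of pairwise non-adjacent vertices. -/
noncomputable def indepNum {V : Type*} [Fintype V] (G : SimpleGraph V) : ℕ :=
  sSup {n | ∃ s : Finset V, (↑s : Set V).Pairwise (fun a b => ¬ G.Adj a b) ∧ s.card = n}

noncomputable local instance {V : Type*} (G : SimpleGraph V) : DecidableRel G.Adj :=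
  fun _ _ => Classical.dec _

/-!
The lower bound `Δ ≤ cfc` holds in every tree: the only path between two neighbours `a, b` of `v`
is `a - v - b`, so the edges at `v` carry distinct colours.

For the upper bound, if `Δ ≤ k` and `n ≤ 2k` then `cfc ≤ k`. Root the tree at a centroid `v`
(every branch at `v` has at most `n / 2` vertices) and list the branches by decreasing size
`s₀ ≥ s₁ ≥ ⋯`. The top edge of branch `i` gets colour `i` and its other `sᵢ - 1` edges get the
distinct colours `i + 1, …, i + sᵢ - 1`; these are `< k` because `(i + 1) sᵢ ≤ n - 1`. On any
path the least colour occurs once: two edges of that colour lie in different branches, so the path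
passes through both top edges, whose colours are at most theirs and distinct.

Given `n ≥ 2t + 2`, `Δ < n - t` would give `cfc ≤ n - t - 1`; and `Δ = n - t` gives `n ≤ 2(n - t)`.
-/
lemma List.exists_length_filter_eq_one {α : Type*} {l : List α} (hl : l.Nodup) (hne : l ≠ [])
    (c : α → ℕ) (h : ∀ e ∈ l, ∀ f ∈ l, e ≠ f → c e = c f → ∃ g ∈ l, c g < c e) :
    ∃ col, (l.filter fun e => c e = col).length = 1 := by
  classical
  obtain ⟨e, he, hmin⟩ := l.toFinset.exists_min_image c
    (List.toFinset_nonempty_iff l |>.2 hne)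
  rw [List.mem_toFinset] at he
  refine ⟨c e, ?_⟩
  have hrep : l.filter (fun f => c f = c e) =
      .replicate (l.filter fun f => c f = c e).length e := by
    refine List.eq_replicate_iff.2 ⟨rfl, fun f hf => ?_⟩
    obtain ⟨hf, hcf⟩ := List.mem_filter.1 hf
    by_contra hfe
    obtain ⟨g, hg, hlt⟩ := h f hf e he hfe (of_decide_eq_true hcf)
    exact (hmin g (List.mem_toFinset.2 hg)).not_gt (of_decide_eq_true hcf ▸ hlt)
  have hnd := hl.filter (fun f => c f = c e)
  rw [hrep, List.nodup_replicate] at hnd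
  have := List.length_pos_of_mem (List.mem_filter.2 ⟨he, decide_eq_true rfl⟩ :
    e ∈ l.filter fun f => c f = c e)
  omega

namespace Finset

variable {α β : Type*} [LinearOrder β] (s : Finset α) (f : α → β)

def rankBy (x : α) : ℕ := #{y ∈ s | f y < f x}

variable {s f}

lemma rankBy_lt_card {x : α} (hx : x ∈ s) : s.rankBy f x < #s :=
  card_lt_card (filter_ssubset.2 ⟨x, hx, lt_irrefl _⟩)

lemma rankBy_lt_rankBy {x y : α} (hy : y ∈ s) (h : f y < f x) : s.rankBy f y < s.rankBy f x :=
  card_lt_card <| (ssubset_iff_of_subset fun z hz => by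
      simp only [mem_filter] at hz ⊢; exact ⟨hz.1, hz.2.trans h⟩).2
    ⟨y, mem_filter.2 ⟨hy, h⟩, by simp⟩

lemma rankBy_injOn (hf : Set.InjOn f s) : Set.InjOn (s.rankBy f) s := by
  intro x hx y hy h
  rcases lt_trichotomy (f x) (f y) with hxy | hxy | hxy
  · exact absurd h (rankBy_lt_rankBy hx hxy).ne
  · exact hf hx hy hxy
  · exact absurd h (rankBy_lt_rankBy hy hxy).ne'

lemma rankBy_eq_zero {x : α} (h : ∀ y ∈ s, f x ≤ f y) : s.rankBy f x = 0 :=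
  card_eq_zero.2 (filter_eq_empty_iff.2 fun y hy => not_lt.2 (h y hy))

end Finset

/-- Where the colour budget `k ≥ n / 2` suffices: `i + 1` branches of size at least `s` fit into
the `n - 1` non-central vertices. -/
lemma Nat.add_le_of_succ_mul_lt {i s k : ℕ} (hi : i + 1 ≤ k) (hs : s ≤ k)
    (h : (i + 1) * s < 2 * k) : i + s ≤ k := by
  rcases Nat.eq_zero_or_pos i with rfl | hi0
  · omega
  · by_contra! hlt
    nlinarith [Nat.mul_le_mul (le_refl (i + 1)) (show k + 1 - i ≤ s by omega)]

namespace SimpleGraph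

lemma IsAcyclic.eq_mk_penultimate_of_mem_edges {V : Type*} {T : SimpleGraph V}
    (hT : T.IsAcyclic) {u x : V} {p : T.Walk u x} (hp : p.IsPath) {e : Sym2 V}
    (he : e ∈ p.edges) (hx : x ∈ e) : e = s(x, p.penultimate) := by
  obtain ⟨y, rfl⟩ := Sym2.mem_iff_exists.1 hx
  rw [← hT.eq_penultimate_of_adj_end hp (p.adj_of_mem_edges he) (p.snd_mem_support_of_mem_edges he)]

theorem IsAcyclic.degree_le_of_isCFConnColoring {V : Type*} {T : SimpleGraph V}
    (hT : T.IsAcyclic) {c : Sym2 V → ℕ} {k : ℕ} (hc : ∀ e, c e < k)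
    (hcf : IsCFConnColoring T c) (v : V) [Fintype (T.neighborSet v)] : T.degree v ≤ k := by
  classical
  have hinj : Set.InjOn (fun u => c s(v, u)) (T.neighborFinset v) := by
    intro a ha b hb hab
    rw [Finset.mem_coe, mem_neighborFinset] at ha hb
    by_contra hne
    obtain ⟨p, hp, col, hcol⟩ := hcf a b hne
    have hq : (Walk.cons ha.symm (Walk.cons hb Walk.nil)).IsPath :=
      Walk.IsPath.mk' (by simp [ha.ne', hb.ne, hne])
    obtain rfl : p = _ := congrArg Subtype.val ((hT.subsingleton_path a b).elim ⟨p, hp⟩ ⟨_, hq⟩)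
    replace hab : c s(a, v) = c s(v, b) := by rw [Sym2.eq_swap]; exact hab
    simp only [Walk.edges_cons, Walk.edges_nil, List.filter_cons, List.filter_nil, hab] at hcol
    split_ifs at hcol
    simp at hcol
  simpa using Finset.card_le_card_of_injOn _ (fun u _ => Finset.mem_range.2 (hc s(v, u))) hinj

namespace IsTree

variable {V : Type*} {T : SimpleGraph V} (hT : T.IsTree)

noncomputable def treePath (a b : V) : T.Walk a b :=
  (hT.existsUnique_path a b).exists.choose

lemma isPath_treePath (a b : V) : (hT.treePath a b).IsPath :=
  (hT.existsUnique_path a b).exists.choose_spec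

variable {hT}

lemma treePath_eq {a b : V} {p : T.Walk a b} (hp : p.IsPath) : hT.treePath a b = p :=
  (hT.existsUnique_path a b).unique (hT.isPath_treePath a b) hp

lemma treePath_self (a : V) : hT.treePath a a = .nil :=
  treePath_eq .nil

lemma treePath_of_adj {a b : V} (h : T.Adj a b) : hT.treePath a b = h.toWalk :=
  treePath_eq (Walk.IsPath.mk' (by simp [h.ne]))

lemma mem_support_treePath_comm {a b z : V} :
    z ∈ (hT.treePath a b).support ↔ z ∈ (hT.treePath b a).support := by
  rw [treePath_eq (hT.isPath_treePath b a).reverse, Walk.support_reverse, List.mem_reverse]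

lemma mem_edges_treePath_comm {a b : V} {e : Sym2 V} :
    e ∈ (hT.treePath a b).edges ↔ e ∈ (hT.treePath b a).edges := by
  rw [treePath_eq (hT.isPath_treePath b a).reverse, Walk.edges_reverse, List.mem_reverse]

variable (hT) in
noncomputable def towards (v x : V) : V := (hT.treePath v x).snd

lemma not_nil_treePath {v x : V} (hx : x ≠ v) : ¬ (hT.treePath v x).Nil :=
  Walk.not_nil_of_ne hx.symm

lemma adj_towards {v x : V} (hx : x ≠ v) : T.Adj v (hT.towards v x) :=
  Walk.adj_snd (not_nil_treePath hx)

lemma towards_of_adj {v u : V} (h : T.Adj v u) : hT.towards v u = u := by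
  simp [towards, treePath_of_adj h]

lemma mem_support_treePath_iff {v u x : V} (h : T.Adj v u) :
    u ∈ (hT.treePath v x).support ↔ x ≠ v ∧ hT.towards v x = u := by
  constructor
  · intro hu
    refine ⟨?_, (hT.isAcyclic.eq_snd_of_adj_start (hT.isPath_treePath v x) h hu).symm⟩
    rintro rfl
    simp [treePath_self, h.ne'] at hu
  · rintro ⟨hx, rfl⟩
    exact List.mem_of_mem_tail (Walk.snd_mem_tail_support (not_nil_treePath hx))

lemma towards_eq_of_mem_support {v x z : V} (hz : z ∈ (hT.treePath v x).support) (hzv : z ≠ v) :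
    hT.towards v z = hT.towards v x := by
  classical
  rw [towards, treePath_eq ((hT.isPath_treePath v x).takeUntil hz)]
  exact Walk.snd_takeUntil hzv _ hz

lemma mem_support_treePath_iff_not_mem {v u x : V} (h : T.Adj v u) :
    u ∈ (hT.treePath v x).support ↔ v ∉ (hT.treePath u x).support := by
  rw [mem_support_treePath_comm, @mem_support_treePath_comm _ _ _ u]
  exact ⟨hT.isAcyclic.ne_mem_support_of_support_of_adj_of_isPath (hT.isPath_treePath x v)
      (hT.isPath_treePath x u) h,
    hT.isAcyclic.mem_support_of_ne_mem_support_of_adj_of_isPath (hT.isPath_treePath x v)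
      (hT.isPath_treePath x u) h⟩

lemma edges_treePath_subset [DecidableEq V] {x y : V} {p : T.Walk x y} (hp : p.IsPath) {a b : V}
    (ha : a ∈ p.support) (hb : b ∈ p.support) : (hT.treePath a b).edges ⊆ p.edges := by
  rw [← p.take_spec ha, Walk.mem_support_append_iff] at hb
  intro e he
  rcases hb with hb | hb
  · rw [mem_edges_treePath_comm, treePath_eq ((hp.takeUntil ha).dropUntil hb)] at he
    exact p.edges_takeUntil_subset_edges ha ((p.takeUntil a ha).edges_dropUntil_subset_edges hb he)
  · rw [treePath_eq ((hp.dropUntil ha).takeUntil hb)] at he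
    exact p.edges_dropUntil_subset_edges ha ((p.dropUntil a ha).edges_takeUntil_subset_edges hb he)

lemma isPath_reverse_append_treePath {v x y : V} (hx : x ≠ v) (hy : y ≠ v)
    (h : hT.towards v x ≠ hT.towards v y) :
    ((hT.treePath v x).reverse.append (hT.treePath v y)).IsPath := by
  have hy_nodup := (hT.isPath_treePath v y).support_nodup
  rw [← Walk.cons_tail_support, List.nodup_cons] at hy_nodup
  rw [Walk.isPath_def, Walk.support_append, Walk.support_reverse, List.nodup_append]
  refine ⟨List.nodup_reverse.2 (hT.isPath_treePath v x).support_nodup, hy_nodup.2, ?_⟩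
  rintro z hzx _ hzy rfl
  rw [List.mem_reverse] at hzx
  have hzv : z ≠ v := by rintro rfl; exact hy_nodup.1 hzy
  exact h ((towards_eq_of_mem_support hzx hzv).symm.trans
    (towards_eq_of_mem_support (List.mem_of_mem_tail hzy) hzv))

lemma mk_towards_mem_edges [DecidableEq V] {v x y a b : V} {p : T.Walk a b} (hp : p.IsPath)
    (hx : x ∈ p.support) (hy : y ∈ p.support) (hxv : x ≠ v) (hyv : y ≠ v)
    (h : hT.towards v x ≠ hT.towards v y) : s(v, hT.towards v x) ∈ p.edges := by
  apply edges_treePath_subset (hT := hT) hp hx hy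
  rw [treePath_eq (isPath_reverse_append_treePath hxv hyv h), Walk.edges_append,
    Walk.edges_reverse]
  exact List.mem_append_left _ (List.mem_reverse.2 (Walk.mk_start_snd_mem_edges
    (not_nil_treePath hxv)))

variable (hT) in
lemma exists_mem_edges_treePath (v : V) {e : Sym2 V} (he : e ∈ T.edgeSet) :
    ∃ x ∈ e, e ∈ (hT.treePath v x).edges := by
  classical
  induction e using Sym2.ind with | _ a b =>
  rw [mem_edgeSet] at he
  by_cases ha : a ∈ (hT.treePath v b).support
  · refine ⟨b, Sym2.mem_mk_right a b, ?_⟩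
    rw [hT.isAcyclic.path_concat (hT.isPath_treePath v a) (hT.isPath_treePath v b) he ha,
      Walk.edges_concat]
    simp
  · have hb := hT.isAcyclic.mem_support_of_ne_mem_support_of_adj_of_isPath
      (hT.isPath_treePath v a) (hT.isPath_treePath v b) he ha
    refine ⟨a, Sym2.mem_mk_left a b, ?_⟩
    rw [hT.isAcyclic.path_concat (hT.isPath_treePath v b) (hT.isPath_treePath v a) he.symm hb,
      Walk.edges_concat]
    simp [Sym2.eq_swap]

open Classical in
variable (hT) in
noncomputable def farEnd (v : V) (e : Sym2 V) : V :=
  if h : ∃ x ∈ e, e ∈ (hT.treePath v x).edges then h.choose else v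

lemma farEnd_spec {v : V} {e : Sym2 V} (he : e ∈ T.edgeSet) :
    hT.farEnd v e ∈ e ∧ e ∈ (hT.treePath v (hT.farEnd v e)).edges := by
  have h := hT.exists_mem_edges_treePath v he
  rw [farEnd, dif_pos h]
  exact h.choose_spec

lemma farEnd_ne {v : V} {e : Sym2 V} (he : e ∈ T.edgeSet) : hT.farEnd v e ≠ v := by
  intro h
  have := (farEnd_spec (hT := hT) (v := v) he).2
  rw [h, treePath_self] at this
  simp at this

lemma farEnd_of_adj {v u : V} (h : T.Adj v u) : hT.farEnd v s(v, u) = u :=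
  (Sym2.mem_iff.1 (farEnd_spec (v := v) h).1).resolve_left (farEnd_ne h)

lemma farEnd_injOn (v : V) : Set.InjOn (hT.farEnd v) T.edgeSet := by
  intro e he f hf h
  obtain ⟨hxe, hep⟩ := farEnd_spec (hT := hT) (v := v) he
  obtain ⟨hxf, hfp⟩ := farEnd_spec (hT := hT) (v := v) hf
  rw [← h] at hxf hfp
  have hp := hT.isPath_treePath v (hT.farEnd v e)
  rw [hT.isAcyclic.eq_mk_penultimate_of_mem_edges hp hep hxe,
    hT.isAcyclic.eq_mk_penultimate_of_mem_edges hp hfp hxf]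

theorem isCFConnColoring_of_label {v : V} (ℓ : V → ℕ)
    (h_inj : ∀ x y, x ≠ v → y ≠ v → hT.towards v x = hT.towards v y → ℓ x = ℓ y → x = y)
    (h_top_le : ∀ x, x ≠ v → ℓ (hT.towards v x) ≤ ℓ x)
    (h_top_inj : ∀ u u', T.Adj v u → T.Adj v u' → ℓ u = ℓ u' → u = u') :
    IsCFConnColoring T (fun e => if e ∈ T.edgeSet then ℓ (hT.farEnd v e) else 0) := by
  classical
  intro x y hxy
  have hP := hT.isPath_treePath x y
  refine ⟨_, hP, List.exists_length_filter_eq_one hP.isTrail.edges_nodup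
    (Walk.edges_eq_nil.not.2 (Walk.not_nil_of_ne hxy)) _ fun e he f hf hef hcol => ?_⟩
  have heT := Walk.edges_subset_edgeSet _ he
  have hfT := Walk.edges_subset_edgeSet _ hf
  have hav := farEnd_ne (hT := hT) (v := v) heT
  have hbv := farEnd_ne (hT := hT) (v := v) hfT
  simp only [if_pos heT, if_pos hfT] at hcol ⊢
  by_cases hbr : hT.towards v (hT.farEnd v e) = hT.towards v (hT.farEnd v f)
  · exact absurd (farEnd_injOn v heT hfT (h_inj _ _ hav hbv hbr hcol)) hef
  have ha := Walk.mem_support_of_mem_edges he (farEnd_spec (hT := hT) (v := v) heT).1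
  have hb := Walk.mem_support_of_mem_edges hf (farEnd_spec (hT := hT) (v := v) hfT).1
  have hcol_top : ∀ {x}, x ≠ v →
      (if s(v, hT.towards v x) ∈ T.edgeSet then ℓ (hT.farEnd v s(v, hT.towards v x)) else 0) =
        ℓ (hT.towards v x) := fun hx => by
    rw [if_pos (T.mem_edgeSet.2 (adj_towards hx)), farEnd_of_adj (adj_towards hx)]
  have hta := h_top_le _ hav
  have htb := h_top_le _ hbv
  have htop_ne := mt (h_top_inj _ _ (adj_towards hav) (adj_towards hbv)) hbr
  -- the two top edges have distinct colours, at most that of `e`, so one of them is smaller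
  rcases lt_or_eq_of_le hta with hlt | heq
  · exact ⟨_, mk_towards_mem_edges hP ha hb hav hbv hbr, by rwa [hcol_top hav]⟩
  · exact ⟨_, mk_towards_mem_edges hP hb ha hbv hav (Ne.symm hbr), by
      rw [hcol_top hbv]; omega⟩

section Branches

open Finset

variable (hT) [Fintype V] [DecidableEq V]

/-- For a neighbour `u` of `v`, the vertex set of the component of `T - v` containing `u`. -/
noncomputable def branch (v u : V) : Finset V := {x | u ∈ (hT.treePath v x).support}

variable {hT}

lemma mem_branch {v u x : V} : x ∈ hT.branch v u ↔ u ∈ (hT.treePath v x).support := by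
  simp [branch]

lemma mem_branch_iff {v u x : V} (h : T.Adj v u) :
    x ∈ hT.branch v u ↔ x ≠ v ∧ hT.towards v x = u :=
  mem_branch.trans (mem_support_treePath_iff h)

lemma self_mem_branch (v u : V) : u ∈ hT.branch v u :=
  mem_branch.2 (Walk.end_mem_support _)

lemma disjoint_branch {v u : V} (h : T.Adj v u) : Disjoint (hT.branch v u) (hT.branch u v) :=
  Finset.disjoint_left.2 fun _ hx hx' =>
    (mem_support_treePath_iff_not_mem h).1 (mem_branch.1 hx) (mem_branch.1 hx')

lemma branch_subset_erase {v u w : V} (h : T.Adj v u) (hw : T.Adj u w) (hwv : w ≠ v) :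
    hT.branch u w ⊆ (hT.branch v u).erase u := by
  intro x hx
  rw [mem_branch] at hx
  refine mem_erase.2 ⟨?_, mem_branch.2 ((mem_support_treePath_iff_not_mem h).2 fun hv => hwv ?_)⟩
  · rintro rfl
    simp [treePath_self, hw.ne'] at hx
  · have hp := hT.isPath_treePath u x
    rw [hT.isAcyclic.eq_snd_of_adj_start hp hw hx, hT.isAcyclic.eq_snd_of_adj_start hp h.symm hv]

variable [DecidableRel T.Adj]

lemma sum_card_branch (v : V) :
    ∑ u ∈ T.neighborFinset v, #(hT.branch v u) = Fintype.card V - 1 := by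
  have hmaps : ∀ x ∈ univ.erase v, hT.towards v x ∈ T.neighborFinset v := fun x hx =>
    (mem_neighborFinset _ _ _).2 (adj_towards (mem_erase.1 hx).1)
  rw [← card_univ, ← card_erase_of_mem (mem_univ v), card_eq_sum_card_fiberwise hmaps]
  refine sum_congr rfl fun u hu => congrArg card (ext fun x => ?_)
  rw [mem_branch_iff ((mem_neighborFinset _ _ _).1 hu)]
  simp

variable (hT) in
/-- Take `v` minimising its largest branch: if some branch at `v` held more than half of the
vertices, moving into it would make the largest branch smaller. -/
lemma exists_centroid [Nonempty V] :
    ∃ v, ∀ u, T.Adj v u → 2 * #(hT.branch v u) ≤ Fintype.card V := by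
  obtain ⟨v, -, hmin⟩ := exists_min_image univ
    (fun w => (T.neighborFinset w).sup fun u => #(hT.branch w u)) univ_nonempty
  refine ⟨v, fun u hu => not_lt.1 fun hbig => ?_⟩
  have hpos : 0 < #(hT.branch v u) := card_pos.2 ⟨u, self_mem_branch v u⟩
  have hsmall : (T.neighborFinset u).sup (fun w => #(hT.branch u w)) < #(hT.branch v u) := by
    refine (Finset.sup_lt_iff hpos).2 fun w hw => ?_
    rw [mem_neighborFinset] at hw
    by_cases hwv : w = v
    · subst hwv
      have := card_le_univ (hT.branch w u ∪ hT.branch u w)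
      rw [card_union_of_disjoint (disjoint_branch hu)] at this
      omega
    · have := card_le_card (branch_subset_erase (hT := hT) hu hw hwv)
      rw [card_erase_of_mem (self_mem_branch v u)] at this
      omega
  have hle : #(hT.branch v u) ≤ (T.neighborFinset v).sup fun u => #(hT.branch v u) :=
    le_sup (f := fun u => #(hT.branch v u)) ((mem_neighborFinset _ _ _).2 hu)
  have := hmin u (mem_univ u)
  omega

variable (hT)

noncomputable def topLabel (v u : V) : ℕ :=
  (T.neighborFinset v).rankBy
    (fun w => toLex (OrderDual.toDual #(hT.branch v w), Fintype.equivFin V w)) u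

/-- The branch through `u` gets the labels `topLabel v u, topLabel v u + 1, …`, with `u` first. -/
noncomputable def label (v x : V) : ℕ :=
  hT.topLabel v (hT.towards v x) + (hT.branch v (hT.towards v x)).rankBy
    (fun y => if y = hT.towards v x then 0 else (Fintype.equivFin V y : ℕ) + 1) x

variable {hT}

lemma topLabel_injOn (v : V) : Set.InjOn (hT.topLabel v) (T.neighborFinset v) :=
  rankBy_injOn fun _ _ _ _ h =>
    (Fintype.equivFin V).injective (congrArg Prod.snd (toLex.injective h))

lemma topLabel_lt_degree {v u : V} (hu : T.Adj v u) : hT.topLabel v u < T.degree v :=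
  rankBy_lt_card ((mem_neighborFinset _ _ _).2 hu)

lemma succ_topLabel_mul_card_branch_le {v u : V} (hu : T.Adj v u) :
    (hT.topLabel v u + 1) * #(hT.branch v u) ≤ Fintype.card V - 1 := by
  set S := insert u {w ∈ T.neighborFinset v |
    toLex (OrderDual.toDual #(hT.branch v w), Fintype.equivFin V w) <
      toLex (OrderDual.toDual #(hT.branch v u), Fintype.equivFin V u)}
  have hS : S ⊆ T.neighborFinset v :=
    insert_subset ((mem_neighborFinset _ _ _).2 hu) (filter_subset _ _)
  have hcard : #S = hT.topLabel v u + 1 := card_insert_of_notMem (by simp)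
  have hlarger : ∀ w ∈ S, #(hT.branch v u) ≤ #(hT.branch v w) := by
    intro w hw
    rcases mem_insert.1 hw with rfl | hw
    · rfl
    · exact OrderDual.toDual_le_toDual.1 (Prod.Lex.toLex_lt_toLex'.1 (mem_filter.1 hw).2).1
  calc (hT.topLabel v u + 1) * #(hT.branch v u) = #S • #(hT.branch v u) := by
        rw [hcard, smul_eq_mul]
    _ ≤ ∑ w ∈ S, #(hT.branch v w) := card_nsmul_le_sum S _ _ hlarger
    _ ≤ ∑ w ∈ T.neighborFinset v, #(hT.branch v w) := sum_le_sum_of_subset hS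
    _ = Fintype.card V - 1 := sum_card_branch v

lemma label_of_adj {v u : V} (hu : T.Adj v u) : hT.label v u = hT.topLabel v u := by
  rw [label, towards_of_adj hu, rankBy_eq_zero fun y _ => by simp]
  rfl

lemma topLabel_add_card_branch_le {v u : V} {k : ℕ}
    (hcent : ∀ u, T.Adj v u → 2 * #(hT.branch v u) ≤ Fintype.card V)
    (hdeg : T.degree v ≤ k) (hn : Fintype.card V ≤ 2 * k) (hu : T.Adj v u) :
    hT.topLabel v u + #(hT.branch v u) ≤ k := by
  have := succ_topLabel_mul_card_branch_le (hT := hT) hu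
  have := hcent u hu
  have := topLabel_lt_degree (hT := hT) hu
  have : 0 < Fintype.card V := Fintype.card_pos_iff.2 ⟨v⟩
  exact Nat.add_le_of_succ_mul_lt (by omega) (by omega) (by omega)

lemma label_lt {v x : V} {k : ℕ}
    (hcent : ∀ u, T.Adj v u → 2 * #(hT.branch v u) ≤ Fintype.card V)
    (hdeg : T.degree v ≤ k) (hn : Fintype.card V ≤ 2 * k) (hx : x ≠ v) : hT.label v x < k :=
  have hu := adj_towards (hT := hT) hx
  (Nat.add_lt_add_left (rankBy_lt_card ((mem_branch_iff hu).2 ⟨hx, rfl⟩)) _).trans_le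
    (topLabel_add_card_branch_le hcent hdeg hn hu)

lemma eq_of_label_eq {v x y : V} (hx : x ≠ v) (hy : y ≠ v)
    (h : hT.towards v x = hT.towards v y) (hl : hT.label v x = hT.label v y) : x = y := by
  have hu := adj_towards (hT := hT) hx
  rw [label, label, ← h, add_right_inj] at hl
  refine rankBy_injOn (fun a _ b _ hab => ?_) ((mem_branch_iff hu).2 ⟨hx, rfl⟩)
    ((mem_branch_iff hu).2 ⟨hy, h.symm⟩) hl
  beta_reduce at hab
  split_ifs at hab with ha hb
  · rw [ha, hb]
  · exact (Fintype.equivFin V).injective (Fin.ext (by omega))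

lemma label_towards_le {v x : V} (hx : x ≠ v) : hT.label v (hT.towards v x) ≤ hT.label v x := by
  rw [label_of_adj (adj_towards hx)]
  exact Nat.le_add_right _ _

end Branches

end IsTree

theorem IsTree.exists_isCFConnColoring {V : Type*} {T : SimpleGraph V} (hT : T.IsTree) [Fintype V]
    [DecidableRel T.Adj] {k : ℕ} (hdeg : ∀ w, T.degree w ≤ k) (hn : Fintype.card V ≤ 2 * k) :
    ∃ c : Sym2 V → ℕ, (∀ e, c e < k) ∧ IsCFConnColoring T c := by
  classical
  have : Nonempty V := hT.1.nonempty
  obtain ⟨v, hcent⟩ := hT.exists_centroid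
  refine ⟨_, fun e => ?_, isCFConnColoring_of_label (hT.label v)
    (fun _ _ hx hy => eq_of_label_eq hx hy) (fun _ hx => label_towards_le hx)
    (fun u u' hu hu' h => topLabel_injOn v ((mem_neighborFinset _ _ _).2 hu)
      ((mem_neighborFinset _ _ _).2 hu') (by rwa [label_of_adj hu, label_of_adj hu'] at h))⟩
  split_ifs with he
  · exact label_lt hcent (hdeg v) hn (farEnd_ne he)
  · have := Fintype.card_pos (α := V)
    omega

theorem IsTree.cfcNum_le {V : Type*} {T : SimpleGraph V} (hT : T.IsTree) [Fintype V]
    [DecidableRel T.Adj] {k : ℕ} (hdeg : ∀ w, T.degree w ≤ k) (hn : Fintype.card V ≤ 2 * k) :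
    cfcNum T ≤ k :=
  Nat.sInf_le (hT.exists_isCFConnColoring hdeg hn)

theorem IsTree.maxDegree_le_cfcNum {V : Type*} {T : SimpleGraph V} (hT : T.IsTree) [Fintype V]
    [DecidableRel T.Adj] : T.maxDegree ≤ cfcNum T :=
  le_csInf ⟨_, hT.exists_isCFConnColoring (k := Fintype.card V)
      (fun w => (T.degree_lt_card_verts w).le) (by omega)⟩
    fun _ ⟨_, hc, hcf⟩ => maxDegree_le_of_forall_degree_le _ _
      fun w => hT.isAcyclic.degree_le_of_isCFConnColoring hc hcf w

end SimpleGraph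

theorem stmt18_general {V : Type*} [Fintype V] (T : SimpleGraph V) (hT : T.IsTree)
    (t : ℕ) (hn : 2 * t + 2 ≤ Fintype.card V) :
    (cfcNum T = Fintype.card V - t ↔ T.maxDegree = Fintype.card V - t) := by
  have hΔ := hT.maxDegree_le_cfcNum
  have hdeg := T.degree_le_maxDegree
  constructor
  · intro hcfc
    refine le_antisymm (hcfc ▸ hΔ) (not_lt.1 fun hlt => ?_)
    have := hT.cfcNum_le (k := Fintype.card V - t - 1) (fun w => by have := hdeg w; omega)
      (by omega)
    omega
  · intro hmax
    exact le_antisymm (hT.cfcNum_le (fun w => hmax ▸ hdeg w) (by omega)) (hmax ▸ hΔ)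

theorem stmt18 {V : Type*} [Fintype V] (T : SimpleGraph V) (hT : T.IsTree)
    (t : ℕ) (ht : 1 ≤ t) (hn : 2 * t + 2 ≤ Fintype.card V) :
    (cfcNum T = Fintype.card V - t ↔ T.maxDegree = Fintype.card V - t) :=
  stmt18_general T hT t hn
end

section
/- If G is a non-complete 2-edge-connected graph, then cfc(G) = 2. -/
open SimpleGraph

/-!
Read a 2-colouring as a set of marked edges; a path is good if it carries exactly one marked
edge. Grow a vertex set `S` with a marking under which any two vertices of `S` are joined by a
good path inside `S`. If `S ≠ V`, take an edge `yx` with `x ∈ S`, `y ∉ S`. As `yx` is not a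
bridge, some path `E` leads from `y` back to `S` avoiding `yx`; let `z` be the first vertex of
`S` on it. Mark `yx` exactly when `x = z`: then `yx`, a good path from `x` to `z` (empty if
`x = z`) and `E` form a cycle with exactly one marked edge. Two vertices of this cycle are joined
by the arc through the marked edge; a new vertex reaches any other vertex `v` of `S` along `E` to
`z` and then by a good path to `v`. Zorn's lemma covers infinite graphs. One colour never
suffices, since a good path between non-adjacent vertices would be a single edge.
-/

namespace SimpleGraph

variable {V : Type*} {G : SimpleGraph V}

namespace Walk

theorem IsPath.append {u v w : V} {p : G.Walk u v} {q : G.Walk v w} (hp : p.IsPath)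
    (hq : q.IsPath) (hpq : ∀ t ∈ p.support, t ∈ q.support → t = v) : (p.append q).IsPath := by
  rw [isPath_def, support_append, List.nodup_append']
  refine ⟨hp.support_nodup, hq.support_nodup.tail, fun t htp htq => ?_⟩
  have hq' := hq.support_nodup
  rw [← cons_tail_support, List.nodup_cons] at hq'
  exact hq'.1 (hpq t htp (List.mem_of_mem_tail htq) ▸ htq)

theorem one_lt_length_of_notMem_edges {u v : V} (p : G.Walk u v) (huv : u ≠ v)
    (hp : s(u, v) ∉ p.edges) : 1 < p.length := by
  rcases p with _ | ⟨_, _ | ⟨_, _⟩⟩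
  · exact absurd rfl huv
  · simp at hp
  · simp

theorem exists_isPath_first_mem {S : Set V} {u v : V} (p : G.Walk u v) (hv : v ∈ S) :
    ∃ z ∈ S, ∃ E : G.Walk u z, E.IsPath ∧ E.edges ⊆ p.edges ∧ ∀ w ∈ E.support, w ∈ S → w = z := by
  classical
  suffices ∃ z ∈ S, ∃ E : G.Walk u z, E.edges ⊆ p.edges ∧ ∀ w ∈ E.support, w ∈ S → w = z by
    obtain ⟨z, hz, E, hEp, hES⟩ := this
    exact ⟨z, hz, E.bypass, E.bypass_isPath, List.Subset.trans (edges_bypass_subset_edges E) hEp,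
      fun w hw => hES w (support_bypass_subset_support E hw)⟩
  induction p with
  | nil => exact ⟨_, hv, nil, by simp, by simp⟩
  | @cons u c v h p ih =>
    by_cases hu : u ∈ S
    · exact ⟨u, hu, nil, by simp, by simp⟩
    obtain ⟨z, hz, E, hEp, hES⟩ := ih hv
    refine ⟨z, hz, cons h E, List.cons_subset_cons _ hEp, ?_⟩
    rintro w (_ | ⟨_, hw⟩) hwS
    · exact absurd hwS hu
    · exact hES w hw hwS

theorem notMem_sym2_of_mem_edges {S : Set V} {u z : V} {E : G.Walk u z}
    (hES : ∀ w ∈ E.support, w ∈ S → w = z) {e : Sym2 V} (he : e ∈ E.edges) : e ∉ S.sym2 := by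
  induction e with
  | h a b =>
    rintro ⟨ha, hb⟩
    exact (E.adj_of_mem_edges he).ne <|
      (hES a (E.fst_mem_support_of_mem_edges he) ha).trans
        (hES b (E.snd_mem_support_of_mem_edges he) hb).symm

/-- In a cycle with exactly one marked edge, one of the two arcs between two of its vertices
carries the marked edge. -/
theorem IsCycle.exists_isPath_countP_eq_one {v : V} {c : G.Walk v v} (hc : c.IsCycle)
    {F : Sym2 V → Bool} (hF : c.edges.countP F = 1) {u w : V} (hu : u ∈ c.support)
    (hw : w ∈ c.support) (huw : u ≠ w) :
    ∃ p : G.Walk u w, p.IsPath ∧ (∀ t ∈ p.support, t ∈ c.support) ∧ p.edges.countP F = 1 := by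
  classical
  set c' := c.rotate u hu
  have hc' : c'.IsCycle := hc.rotate hu
  have hw' : w ∈ c'.support := (mem_support_rotate_iff c u hu).2 hw
  have hsub : ∀ t ∈ c'.support, t ∈ c.support := fun t => (mem_support_rotate_iff c u hu).1
  have hsplit := take_spec c' hw'
  have hcount : (c'.takeUntil w hw').edges.countP F + (c'.dropUntil w hw').edges.countP F = 1 := by
    rw [← List.countP_append, ← edges_append, hsplit, (rotate_edges c u hu).perm.countP_eq, hF]
  by_cases htake : (c'.takeUntil w hw').edges.countP F = 1
  · exact ⟨_, hc'.isPath_takeUntil hw',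
      fun t ht => hsub t (support_takeUntil_subset_support c' hw' ht), htake⟩
  · have hdrop : (c'.dropUntil w hw').IsPath :=
      IsCycle.isPath_of_append_right (p := c'.takeUntil w hw') (not_nil_of_ne huw)
        (by rwa [hsplit])
    refine ⟨_, hdrop.reverse, fun t ht => hsub t ?_, ?_⟩
    · rw [support_reverse, List.mem_reverse] at ht
      exact support_dropUntil_subset_support c' hw' ht
    · rw [edges_reverse, List.countP_reverse]
      omega

end Walk

def IsCFConnOn (G : SimpleGraph V) (S : Set V) (F : Sym2 V → Bool) : Prop :=
  ∀ u ∈ S, ∀ v ∈ S, u ≠ v →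
    ∃ p : G.Walk u v, p.IsPath ∧ (∀ w ∈ p.support, w ∈ S) ∧ p.edges.countP F = 1

namespace IsCFConnOn

variable {S T : Set V} {F F' : Sym2 V → Bool}

theorem congr (h : IsCFConnOn G S F) (hF : ∀ e ∈ S.sym2, F' e = F e) : IsCFConnOn G S F' := by
  intro u hu v hv huv
  obtain ⟨p, hp, hpS, hpF⟩ := h u hu v hv huv
  refine ⟨p, hp, hpS, ?_⟩
  rw [← hpF]
  refine List.countP_congr fun e he => ?_
  rw [hF e (Set.mem_sym2_iff_subset.2 fun w hw => hpS w (p.mem_support_of_mem_edges he hw))]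

theorem of_subset (h : IsCFConnOn G S F) (hST : S ⊆ T)
    (hnew : ∀ u ∈ T, ∀ v ∈ T, u ≠ v → u ∉ S →
      ∃ p : G.Walk u v, p.IsPath ∧ (∀ w ∈ p.support, w ∈ T) ∧ p.edges.countP F = 1) :
    IsCFConnOn G T F := by
  intro u hu v hv huv
  by_cases huS : u ∈ S
  · by_cases hvS : v ∈ S
    · obtain ⟨p, hp, hpS, hpF⟩ := h u huS v hvS huv
      exact ⟨p, hp, fun w hw => hST (hpS w hw), hpF⟩
    · obtain ⟨p, hp, hpT, hpF⟩ := hnew v hv u hu huv.symm hvS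
      refine ⟨p.reverse, hp.reverse, fun w hw => hpT w ?_, ?_⟩
      · rwa [Walk.support_reverse, List.mem_reverse] at hw
      · rwa [Walk.edges_reverse, List.countP_reverse]
  · exact hnew u hu v hv huv huS

theorem exists_isCycle_ear (hF : IsCFConnOn G S F) {x y z : V} (hx : x ∈ S) (hy : y ∉ S)
    (hz : z ∈ S) (hyx : G.Adj y x) {E : G.Walk y z} (hE : E.IsPath) (hyxE : s(y, x) ∉ E.edges)
    (hES : ∀ w ∈ E.support, w ∈ S → w = z) (hFE : ∀ e ∈ E.edges, F e = false)
    (hFyx : F s(y, x) = true ↔ x = z) :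
    ∃ C : G.Walk y y, C.IsCycle ∧ C.edges.countP F = 1 ∧ (∀ w ∈ E.support, w ∈ C.support) ∧
      ∀ w ∈ C.support, w ∈ S ∪ {w | w ∈ E.support} := by
  classical
  obtain ⟨Q, hQ, hQS, hQF⟩ : ∃ Q : G.Walk x z, Q.IsPath ∧ (∀ w ∈ Q.support, w ∈ S) ∧
      Q.edges.countP F = if x = z then 0 else 1 := by
    by_cases hxz : x = z
    · subst hxz
      exact ⟨Walk.nil, Walk.IsPath.nil, by simpa using hx, by simp⟩
    · obtain ⟨Q, hQ, hQS, hQF⟩ := hF x hx z hz hxz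
      exact ⟨Q, hQ, hQS, by simp [hQF, hxz]⟩
  -- Marking `yx` exactly when `x = z` leaves one marked edge on the cycle `yx`, `Q`, `E⁻¹`.
  set C := (Walk.cons hyx Q).append E.reverse
  have hC : C.IsCycle := by
    refine (hQ.cons fun h => hy (hQS y h)).isCycle_append hE.reverse ?_ ?_
    · intro w hwQ hwE
      have hwz : w ≠ z := by
        rintro rfl
        have hnodup := hE.reverse.support_nodup
        rw [← Walk.cons_tail_support, List.nodup_cons] at hnodup
        exact hnodup.1 hwE
      have hwE' : w ∈ E.support := by
        simpa using List.mem_of_mem_tail hwE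
      exact hwz (hES w hwE' (hQS w (by simpa using hwQ)))
    · by_cases hxz : x = z
      · subst hxz
        exact Or.inr (by simpa using E.one_lt_length_of_notMem_edges (fun h => hy (h ▸ hx)) hyxE)
      · exact Or.inl (by simpa using Walk.not_nil_iff_lt_length.1 (Walk.not_nil_of_ne hxz))
  have hCF : C.edges.countP F = 1 := by
    have hE0 : E.edges.countP F = 0 := List.countP_eq_zero.2 fun e he => by simp [hFE e he]
    simp only [C, Walk.edges_append, Walk.edges_cons, Walk.edges_reverse, List.cons_append,
      List.countP_cons, List.countP_append, List.countP_reverse, hE0, hQF]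
    by_cases hxz : x = z
    · rw [if_pos hxz, if_pos (hFyx.2 hxz)]
    · rw [if_neg hxz, if_neg (mt hFyx.1 hxz)]
  refine ⟨C, hC, hCF, fun w hw => by simp [C, hw], fun w hw => ?_⟩
  simp only [C, Walk.mem_support_append_iff, Walk.support_cons, List.mem_cons,
    Walk.support_reverse, List.mem_reverse] at hw
  rcases hw with (rfl | hw) | hw
  · exact Or.inr E.start_mem_support
  · exact Or.inl (hQS w hw)
  · exact Or.inr hw

theorem union_ear (hF : IsCFConnOn G S F) {x y z : V} (hx : x ∈ S) (hy : y ∉ S) (hz : z ∈ S)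
    (hyx : G.Adj y x) {E : G.Walk y z} (hE : E.IsPath) (hyxE : s(y, x) ∉ E.edges)
    (hES : ∀ w ∈ E.support, w ∈ S → w = z) (hF'S : ∀ e ∈ S.sym2, F' e = F e)
    (hF'E : ∀ e ∈ E.edges, F' e = false) (hF'yx : F' s(y, x) = true ↔ x = z) :
    IsCFConnOn G (S ∪ {w | w ∈ E.support}) F' := by
  classical
  have hF' := hF.congr hF'S
  obtain ⟨C, hC, hCF, hEC, hCS⟩ := hF'.exists_isCycle_ear hx hy hz hyx hE hyxE hES hF'E hF'yx
  refine hF'.of_subset Set.subset_union_left fun u hu v hv huv huS => ?_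
  have huE : u ∈ E.support := hu.resolve_left huS
  by_cases hvC : v ∈ C.support
  · obtain ⟨p, hp, hpC, hpF⟩ := hC.exists_isPath_countP_eq_one hCF (hEC u huE) hvC huv
    exact ⟨p, hp, fun w hw => hCS w (hpC w hw), hpF⟩
  · have hvS : v ∈ S := hv.resolve_right fun h => hvC (hEC v h)
    have hvz : z ≠ v := fun h => hvC (h ▸ hEC z E.end_mem_support)
    have hD : ∀ w ∈ (E.dropUntil u huE).support, w ∈ E.support :=
      fun w hw => E.support_dropUntil_subset_support huE hw
    obtain ⟨p, hp, hpS, hpF⟩ := hF' z hz v hvS hvz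
    refine ⟨(E.dropUntil u huE).append p,
      (hE.dropUntil huE).append hp fun w hw hwp => hES w (hD w hw) (hpS w hwp), ?_, ?_⟩
    · intro w hw
      rcases (Walk.mem_support_append_iff _ _).1 hw with hw | hw
      · exact Or.inr (hD w hw)
      · exact Or.inl (hpS w hw)
    · rw [Walk.edges_append, List.countP_append, hpF, List.countP_eq_zero.2 fun e he => by
        simp [hF'E e (E.edges_dropUntil_subset_edges huE he)]]

end IsCFConnOn

variable (G) in
structure PartialCFMarking where
  verts : Set V
  marked : Sym2 V → Bool
  isCFConnOn : G.IsCFConnOn verts marked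

namespace PartialCFMarking

-- Marks inside `verts` are frozen, so that the union of a chain is an upper bound.
instance : Preorder (G.PartialCFMarking) where
  le P Q := P.verts ⊆ Q.verts ∧ ∀ e ∈ P.verts.sym2, Q.marked e = P.marked e
  le_refl _ := ⟨subset_rfl, fun _ _ => rfl⟩
  le_trans _ _ _ hPQ hQR := ⟨hPQ.1.trans hQR.1, fun e he =>
    (hQR.2 e (Set.mem_sym2_iff_subset.2 ((Set.mem_sym2_iff_subset.1 he).trans hPQ.1))).trans
      (hPQ.2 e he)⟩

theorem bddAbove_of_isChain {c : Set G.PartialCFMarking} (hc : IsChain (· ≤ ·) c) :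
    BddAbove c := by
  classical
  let F : Sym2 V → Bool := fun e => decide (∃ P ∈ c, e ∈ P.verts.sym2 ∧ P.marked e = true)
  have hF : ∀ P ∈ c, ∀ e ∈ P.verts.sym2, F e = P.marked e := by
    intro P hP e he
    rw [Bool.eq_iff_iff, decide_eq_true_iff]
    refine ⟨fun ⟨Q, hQ, heQ, hQe⟩ => ?_, fun h => ⟨P, hP, he, h⟩⟩
    rcases hc.total hP hQ with hPQ | hQP
    · rwa [← hPQ.2 e he]
    · rwa [hQP.2 e heQ]
  refine ⟨⟨⋃ P ∈ c, P.verts, F, ?_⟩, fun P hP => ⟨Set.subset_biUnion_of_mem hP, hF P hP⟩⟩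
  intro u hu v hv huv
  obtain ⟨P, hP, huP, hvP⟩ : ∃ P ∈ c, u ∈ P.verts ∧ v ∈ P.verts := by
    obtain ⟨Pu, hPu, huPu⟩ := Set.mem_iUnion₂.1 hu
    obtain ⟨Pv, hPv, hvPv⟩ := Set.mem_iUnion₂.1 hv
    rcases hc.total hPu hPv with h | h
    · exact ⟨Pv, hPv, h.1 huPu, hvPv⟩
    · exact ⟨Pu, hPu, huPu, h.1 hvPv⟩
  obtain ⟨p, hp, hpP, hpF⟩ := (P.isCFConnOn.congr (hF P hP)) u huP v hvP huv
  exact ⟨p, hp, fun w hw => Set.mem_biUnion hP (hpP w hw), hpF⟩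

theorem exists_gt (hG : G.Connected) (hbr : ∀ e ∈ G.edgeSet, ¬G.IsBridge e)
    (P : G.PartialCFMarking) (hP : P.verts ≠ Set.univ) : ∃ Q, P < Q := by
  classical
  rcases P.verts.eq_empty_or_nonempty with hS | ⟨s, hs⟩
  · obtain ⟨v⟩ := hG.nonempty
    refine ⟨⟨{v}, P.marked, fun u hu w hw huw => absurd (hu.trans hw.symm) huw⟩,
      lt_of_le_not_ge ⟨by simp [hS], by simp [hS]⟩ fun h => by simpa [hS] using h.1⟩
  obtain ⟨t, ht⟩ := (Set.ne_univ_iff_exists_notMem _).1 hP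
  obtain ⟨⟨⟨x, y⟩, hxy⟩, -, hx, hy⟩ := (hG.preconnected s t).some.exists_boundary_dart _ hs ht
  obtain ⟨p, hp⟩ : ∃ p : G.Walk y x, s(y, x) ∉ p.edges := by
    by_contra! h
    exact hbr _ hxy.symm (isBridge_iff_forall_walk_mem_edges.2 h)
  obtain ⟨z, hz, E, hE, hEp, hES⟩ := p.exists_isPath_first_mem hx
  let F' : Sym2 V → Bool := fun e =>
    if e ∈ P.verts.sym2 then P.marked e else decide (e = s(y, x) ∧ x = z)
  have hyxS : s(y, x) ∉ P.verts.sym2 := fun h => hy h.1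
  have hF'E : ∀ e ∈ E.edges, F' e = false := fun e he => by
    simp [F', E.notMem_sym2_of_mem_edges hES he, ne_of_mem_of_not_mem (hEp he) hp]
  refine ⟨⟨_, F', P.isCFConnOn.union_ear hx hy hz hxy.symm hE (fun h => hp (hEp h)) hES
      (fun e he => if_pos he) hF'E (by simp [F', hyxS])⟩,
    lt_of_le_not_ge ⟨Set.subset_union_left, fun e he => if_pos he⟩
      fun h => hy (h.1 (Or.inr E.start_mem_support))⟩

end PartialCFMarking

theorem exists_isCFConnOn_univ (hG : G.Connected) (hbr : ∀ e ∈ G.edgeSet, ¬G.IsBridge e) :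
    ∃ F, G.IsCFConnOn Set.univ F := by
  obtain ⟨P, hP⟩ := zorn_le fun _ => PartialCFMarking.bddAbove_of_isChain (G := G)
  have hPuniv : P.verts = Set.univ := by
    by_contra h
    obtain ⟨Q, hQ⟩ := P.exists_gt hG hbr h
    exact hP.not_lt hQ
  exact ⟨P.marked, hPuniv ▸ P.isCFConnOn⟩

theorem IsCFConnOn.isCFConnColoring {F : Sym2 V → Bool} (h : G.IsCFConnOn Set.univ F) :
    IsCFConnColoring G fun e => (F e).toNat := by
  intro u v huv
  obtain ⟨p, hp, -, hpF⟩ := h u trivial v trivial huv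
  refine ⟨p, hp, 1, ?_⟩
  simpa [Bool.toNat_eq_one, ← List.countP_eq_length_filter] using hpF

theorem two_le_of_isCFConnColoring (hG : G ≠ ⊤) {c : Sym2 V → ℕ} {k : ℕ} (hc : ∀ e, c e < k)
    (hcf : IsCFConnColoring G c) : 2 ≤ k := by
  by_contra! hk
  obtain ⟨u, v, huv, hadj⟩ : ∃ u v, u ≠ v ∧ ¬G.Adj u v := by
    by_contra! h
    exact hG (eq_top_iff.2 fun u v huv => h u v huv)
  obtain ⟨p, -, col, hcol⟩ := hcf u v huv
  have hc0 : ∀ e, c e = 0 := fun e => by have := hc e; omega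
  rcases eq_or_ne col 0 with rfl | hcol0
  · rw [List.filter_eq_self.2 (by simp [hc0]), Walk.length_edges] at hcol
    exact hadj (Walk.adj_of_length_eq_one hcol)
  · rw [List.filter_eq_nil_iff.2 (by simp [hc0, hcol0.symm])] at hcol
    simp at hcol

end SimpleGraph

theorem stmt19_general {V : Type*} (G : SimpleGraph V) (hG : G.Connected)
    (h2ec : ∀ e ∈ G.edgeSet, (G.deleteEdges {e}).Connected)
    (hnc : G ≠ ⊤) : cfcNum G = 2 := by
  have hbr : ∀ e ∈ G.edgeSet, ¬G.IsBridge e := by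
    rintro ⟨u, v⟩ he
    exact not_not.2 ((h2ec _ he).preconnected u v)
  obtain ⟨F, hF⟩ := exists_isCFConnOn_univ hG hbr
  refine IsLeast.csInf_eq ⟨⟨_, fun e => (F e).toNat_lt, hF.isCFConnColoring⟩, ?_⟩
  rintro k ⟨c, hc, hcf⟩
  exact two_le_of_isCFConnColoring hnc hc hcf

theorem stmt19 {V : Type*} [Nontrivial V] (G : SimpleGraph V) (hG : G.Connected)
    (h2ec : ∀ e ∈ G.edgeSet, (G.deleteEdges {e}).Connected)
    (hnc : G ≠ ⊤) : cfcNum G = 2 :=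
  stmt19_general G hG h2ec hnc
end
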